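/- Let q > 1 be real, λ = q − q^{−1}, γ ∈ ℝ, and let ε be a nonzero complex number. Then the function g(x) = x · ₁φ₁(−q^{−2} ε^{−1}; q^{−6}; q^{−4}, ε q^{−2γ−5} λ² x²) satisfies, for every real x, the reduced eigenvalue equation 0 = g(x)·(q + q^{−1} − ε q^{−2γ} λ² x²) − q^{−1} g(q² x) − q g(q^{−2} x)·(1 + q^{−2γ−1} λ² x²). -/

import Mathlib

/-!
The coefficients `t j` of `φ(z) = ₁φ₁(a;c;p,z)` satisfy the first-order recurrence
`t (j+1) (1 - p^(j+1)) (1 - c p^j) = -p^j (1 - a p^j) t j`; comparing coefficients turns it into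
the second-order q-difference equation `p φ(z) - (p + c - p z) φ(p z) + (c - a p z) φ(p² z) = 0`,
and the same recurrence gives convergence everywhere by the ratio test. For `p = q⁻⁴`, `c = q⁻⁶`
and `z = q⁴ ζ` with `ζ = ε q^(-2γ-5) λ² x²`, the values `φ(q⁴ζ), φ(ζ), φ(q⁻⁴ζ)` are the ones in
`g(q²x), g(x), g(q⁻²x)`, and the q-difference equation becomes the eigenvalue equation divided by `x`.
-/

open scoped BigOperators

/-- The q-shifted factorial `(a;p)_n = ∏_{i=0}^{n-1} (1 - a p^i)`. -/
noncomputable def qPoch (a p : ℂ) (n : ℕ) : ℂ :=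
  ∏ i ∈ Finset.range n, (1 - a * p ^ i)

/-- The basic hypergeometric series
`₁φ₁(a;c;p,z) = ∑_{j=0}^∞ ((a;p)_j / ((p;p)_j (c;p)_j)) (-1)^j p^(j(j-1)/2) z^j`. -/
noncomputable def phi11 (a c p z : ℂ) : ℂ :=
  ∑' j : ℕ, qPoch a p j / (qPoch p p j * qPoch c p j) * (-1) ^ j *
    p ^ (j * (j - 1) / 2) * z ^ j

open Filter Topology

lemma qPoch_succ (a p : ℂ) (n : ℕ) : qPoch a p (n + 1) = qPoch a p n * (1 - a * p ^ n) :=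
  Finset.prod_range_succ _ _

lemma mul_pow_ne_one_of_norm_lt_one {c p : ℂ} (hc : ‖c‖ < 1) (hp : ‖p‖ ≤ 1) (k : ℕ) :
    c * p ^ k ≠ 1 := by
  refine ne_of_apply_ne norm (ne_of_lt ?_)
  rw [norm_mul, norm_pow, norm_one]
  exact mul_lt_one_of_nonneg_of_lt_one_left (norm_nonneg c) hc (pow_le_one₀ (norm_nonneg p) hp)

noncomputable def phi11Coeff (a c p : ℂ) (j : ℕ) : ℂ :=
  qPoch a p j / (qPoch p p j * qPoch c p j) * (-1) ^ j * p ^ (j * (j - 1) / 2)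

section Coeff

variable {a c p : ℂ}

lemma one_sub_pow_succ_ne_zero (hp : ‖p‖ < 1) (j : ℕ) : 1 - p ^ (j + 1) ≠ 0 :=
  sub_ne_zero.mpr (pow_succ' p j ▸ mul_pow_ne_one_of_norm_lt_one hp hp.le j).symm

lemma phi11Coeff_succ_mul (hp : ‖p‖ < 1) (hc : ∀ k, c * p ^ k ≠ 1) (j : ℕ) :
    phi11Coeff a c p (j + 1) * ((1 - p ^ (j + 1)) * (1 - c * p ^ j)) =
      -(p ^ j * (1 - a * p ^ j)) * phi11Coeff a c p j := by
  have hd : (1 - p ^ (j + 1)) * (1 - c * p ^ j) ≠ 0 :=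
    mul_ne_zero (one_sub_pow_succ_ne_zero hp j) (sub_ne_zero.mpr (hc j).symm)
  simp only [phi11Coeff, qPoch_succ, Nat.triangle_succ, ← pow_succ']
  rw [mul_mul_mul_comm (qPoch p p j), ← div_div]
  generalize (1 - p ^ (j + 1)) * (1 - c * p ^ j) = d at hd ⊢
  field_simp
  ring

lemma summable_phi11Coeff_mul_pow (hp : ‖p‖ < 1) (hc : ∀ k, c * p ^ k ≠ 1) (z : ℂ) :
    Summable fun j => phi11Coeff a c p j * z ^ j := by
  have hpow := tendsto_pow_atTop_nhds_zero_of_norm_lt_one hp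
  have hratio : Tendsto (fun j : ℕ =>
      -(p ^ j * (1 - a * p ^ j)) / ((1 - p ^ (j + 1)) * (1 - c * p ^ j)) * z) atTop (𝓝 0) := by
    have hnum := ((hpow.mul ((tendsto_const_nhds (x := (1 : ℂ))).sub (hpow.const_mul a))).neg)
    have hden := ((tendsto_const_nhds (x := (1 : ℂ))).sub (hpow.comp (tendsto_add_atTop_nat 1))).mul
      ((tendsto_const_nhds (x := (1 : ℂ))).sub (hpow.const_mul c))
    simpa using (hnum.div hden (by simp)).mul_const z
  refine summable_of_ratio_norm_eventually_le (r := 1 / 2) (by norm_num) ?_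
  filter_upwards [hratio.norm.eventually_le_const (by norm_num : ‖(0 : ℂ)‖ < 1 / 2)] with j hj
  have hd : (1 - p ^ (j + 1)) * (1 - c * p ^ j) ≠ 0 :=
    mul_ne_zero (one_sub_pow_succ_ne_zero hp j) (sub_ne_zero.mpr (hc j).symm)
  rw [eq_div_of_mul_eq hd (phi11Coeff_succ_mul hp hc j)]
  calc _ = ‖-(p ^ j * (1 - a * p ^ j)) / ((1 - p ^ (j + 1)) * (1 - c * p ^ j)) * z‖ *
          ‖phi11Coeff a c p j * z ^ j‖ := by rw [← norm_mul]; ring_nf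
    _ ≤ 1 / 2 * ‖phi11Coeff a c p j * z ^ j‖ := by gcongr

lemma phi11_qDifference (hp : ‖p‖ < 1) (hc : ∀ k, c * p ^ k ≠ 1) (z : ℂ) :
    p * phi11 a c p z - (p + c - p * z) * phi11 a c p (p * z) +
      (c - a * p * z) * phi11 a c p (p ^ 2 * z) = 0 := by
  have hs (w : ℂ) : HasSum (fun j => phi11Coeff a c p j * w ^ j) (phi11 a c p w) :=
    (summable_phi11Coeff_mul_pow hp hc w).hasSum
  -- `A j` is the `z ^ j`-term of the first three summands, `B j` the `z ^ (j + 1)`-term of the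
  -- last two; the recurrence says `A (j + 1) = -B j`, and `A 0 = 0`.
  set A : ℕ → ℂ := fun j => phi11Coeff a c p j * ((p - c * p ^ j) * (1 - p ^ j)) * z ^ j
  set B : ℕ → ℂ := fun j => phi11Coeff a c p j * (p ^ (j + 1) * (1 - a * p ^ j)) * z ^ (j + 1)
  have hA : HasSum A (p * phi11 a c p z - (p + c) * phi11 a c p (p * z) +
      c * phi11 a c p (p ^ 2 * z)) := by
    refine ((((hs z).mul_left p).sub ((hs (p * z)).mul_left (p + c))).add
      ((hs (p ^ 2 * z)).mul_left c)).congr_fun fun j => ?_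
    simp only [A, mul_pow, ← pow_mul]
    ring
  have hB : HasSum B (p * z * phi11 a c p (p * z) - a * p * z * phi11 a c p (p ^ 2 * z)) := by
    refine (((hs (p * z)).mul_left (p * z)).sub
      ((hs (p ^ 2 * z)).mul_left (a * p * z))).congr_fun fun j => ?_
    simp only [B, mul_pow, ← pow_mul]
    ring
  have hA_succ : HasSum (fun j => A (j + 1)) (-(p * z * phi11 a c p (p * z) -
      a * p * z * phi11 a c p (p ^ 2 * z))) := by
    refine hB.neg.congr_fun fun j => ?_
    linear_combination p * z ^ (j + 1) * phi11Coeff_succ_mul (a := a) hp hc j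
  have hA₀ : A 0 = 0 := by simp [A]
  have := hA_succ.unique ((hasSum_nat_add_iff' 1).mpr hA)
  rw [Finset.sum_range_one, hA₀] at this
  linear_combination -this

end Coeff

lemma phi11_qDifference_of_one_lt_norm {Q : ℂ} (hQ : 1 < ‖Q‖) (a ζ : ℂ) :
    phi11 a (Q ^ (-6 : ℤ)) (Q ^ (-4 : ℤ)) ζ * (Q + Q⁻¹ - Q ^ 5 * ζ) -
      Q * phi11 a (Q ^ (-6 : ℤ)) (Q ^ (-4 : ℤ)) (Q ^ 4 * ζ) -
      Q⁻¹ * (1 - a * Q ^ 6 * ζ) * phi11 a (Q ^ (-6 : ℤ)) (Q ^ (-4 : ℤ)) (Q ^ (-4 : ℤ) * ζ) = 0 := by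
  have hQ₀ : Q ≠ 0 := norm_pos_iff.mp (one_pos.trans hQ)
  have hp : ‖Q ^ (-4 : ℤ)‖ < 1 := by rw [norm_zpow]; exact zpow_lt_one_of_neg₀ hQ (by norm_num)
  have hc : ‖Q ^ (-6 : ℤ)‖ < 1 := by rw [norm_zpow]; exact zpow_lt_one_of_neg₀ hQ (by norm_num)
  have key := phi11_qDifference (a := a) hp (mul_pow_ne_one_of_norm_lt_one hc hp.le) (Q ^ 4 * ζ)
  have e₁ : Q ^ (-4 : ℤ) * (Q ^ 4 * ζ) = ζ := by field_simp
  have e₂ : (Q ^ (-4 : ℤ)) ^ 2 * (Q ^ 4 * ζ) = Q ^ (-4 : ℤ) * ζ := by field_simp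
  rw [e₁, e₂] at key
  simp only [zpow_neg, zpow_ofNat] at key ⊢
  field_simp at key ⊢
  linear_combination -key

/-- The function `g(x) = x ₁φ₁(-q⁻²ε⁻¹; q⁻⁶; q⁻⁴, ε q^{-2γ-5} λ² x²)` satisfies the
reduced eigenvalue equation
`0 = g(x)(q + q⁻¹ - ε q^{-2γ} λ² x²) - q⁻¹ g(q²x) - q g(q⁻²x)(1 + q^{-2γ-1} λ² x²)`
for every real `x`, where `λ = q - q⁻¹`. -/
theorem odd_solution (q γ : ℝ) (hq : 1 < q) (ε : ℂ) (hε : ε ≠ 0)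
    (g : ℝ → ℂ)
    (hg : ∀ x : ℝ, g x = (x : ℂ) *
      phi11 (-(q : ℂ) ^ (-2 : ℤ) * ε⁻¹) ((q : ℂ) ^ (-6 : ℤ)) ((q : ℂ) ^ (-4 : ℤ))
        (ε * ((q ^ (-2 * γ - 5) : ℝ) : ℂ) * ((q - q⁻¹ : ℝ) : ℂ) ^ 2 * (x : ℂ) ^ 2)) :
    ∀ x : ℝ,
      0 = g x * ((q : ℂ) + (q : ℂ)⁻¹ -
            ε * ((q ^ (-2 * γ) : ℝ) : ℂ) * ((q - q⁻¹ : ℝ) : ℂ) ^ 2 * (x : ℂ) ^ 2) -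
        (q : ℂ)⁻¹ * g (q ^ 2 * x) -
        (q : ℂ) * g (q⁻¹ ^ 2 * x) *
          (1 + ((q ^ (-2 * γ - 1) : ℝ) : ℂ) * ((q - q⁻¹ : ℝ) : ℂ) ^ 2 * (x : ℂ) ^ 2) := by
  intro x
  have hq₀ : 0 < q := one_pos.trans hq
  have key := phi11_qDifference_of_one_lt_norm (Q := (q : ℂ))
    (by rwa [Complex.norm_real, Real.norm_of_nonneg hq₀.le]) (-(q : ℂ) ^ (-2 : ℤ) * ε⁻¹)
    (ε * ((q ^ (-2 * γ - 5) : ℝ) : ℂ) * ((q - q⁻¹ : ℝ) : ℂ) ^ 2 * (x : ℂ) ^ 2)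
  have rpow₅ : q ^ (-2 * γ) = q ^ (-2 * γ - 5) * q ^ 5 := by
    rw [← Real.rpow_add_natCast hq₀.ne']; ring_nf
  have rpow₄ : q ^ (-2 * γ - 1) = q ^ (-2 * γ - 5) * q ^ 4 := by
    rw [← Real.rpow_add_natCast hq₀.ne']; ring_nf
  rw [hg, hg, hg, rpow₅, rpow₄]
  simp only [Complex.ofReal_mul, Complex.ofReal_pow, Complex.ofReal_inv, zpow_neg, zpow_ofNat] at key ⊢
  -- otherwise `field_simp` also rewrites `q - q⁻¹` inside the cast
  generalize ((q - q⁻¹ : ℝ) : ℂ) = L at key ⊢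
  field_simp at key ⊢
  linear_combination (-(x : ℂ)) * key
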